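/- Let Λ be a Banach space, t₀ ≥ 0, a > 0 and I = [t₀, t₀ + a]. Let S, K : [0, a] → L(Λ) be operator-norm continuous families of bounded linear operators on Λ and set ζ₁ := sup_{t ∈ [0,a]} max(‖S(t)‖, ‖K(t)‖). Let R > 0, B_R := {x ∈ Λ : ‖x‖ ≤ R}, and Ω := C(I, B_R) with the sup norm. Let σ : I → I be absolutely continuous with σ′(s) ≥ b > 0 for a.e. s ∈ I. Let φ : I × Λ → Λ be continuous with ‖φ(s, x) − φ(s, y)‖ ≤ δ‖x − y‖ for all s ∈ I and x, y ∈ B_R, and set ζ₂ := sup_{s ∈ I} ‖φ(s, 0)‖. Let g : Ω → Λ satisfy ‖g(μ₁) − g(μ₂)‖ ≤ λ‖μ₁ − μ₂‖_∞ for all μ₁, μ₂ ∈ Ω, with ζ₃ := sup_{μ ∈ Ω} ‖g(μ)‖. Let ξ₀ ∈ Λ. Assume ζ₁(‖ξ₀‖ + ζ₃ + aδR/b + aζ₂) ≤ R and ζ₁λ + ζ₁δa/b < 1. Then there exists a unique ξ ∈ Ω such that ξ(t) = S(t − t₀)ξ₀ − S(t − t₀)g(ξ) + ∫_{t₀}^{t}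 K(t − s) φ(s, ξ(σ(s))) ds for every t ∈ I. -/

import Mathlib

/-!
The right-hand side of the integral equation defines a map `T` on `Ω = C(I, B_R)`. Bounding
`‖S‖, ‖K‖` by `ζ₁`, `‖φ(s, x)‖` by `δR + ζ₂` and `‖g‖` by `ζ₃` shows that `T` maps `Ω` into
itself, and the Lipschitz bounds on `φ` and `g` give `‖Tξ - Tη‖_∞ ≤ ζ₁(λ + aδ)‖ξ - η‖_∞`.
Since `σ` maps `I` into itself while `σ' ≥ b`, we get `ab ≤ σ(t₀ + a) - σ(t₀) ≤ a`, so `b ≤ 1`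
and the two hypotheses of the theorem dominate what these estimates need. Banach's fixed point
theorem on the complete space `Ω` then yields the unique mild solution.
-/

open MeasureTheory Set

theorem IsCompact.le_iSup_of_continuousOn {X : Type*} [TopologicalSpace X] {s : Set X}
    (hs : IsCompact s) {f : X → ℝ} (hf : ContinuousOn f s) {x : X} (hx : x ∈ s) :
    f x ≤ ⨆ y : s, f y :=
  le_ciSup (image_eq_range f s ▸ hs.bddAbove_image hf) ⟨x, hx⟩

theorem continuousOn_Icc_of_eq_add_integral {E : Type*} [NormedAddCommGroup E]
    [NormedSpace ℝ E] {σ σ' : ℝ → E} {t₀ t₁ : ℝ} (hσ' : IntegrableOn σ' (Icc t₀ t₁))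
    (hσ : ∀ t ∈ Icc t₀ t₁, σ t = σ t₀ + ∫ s in t₀..t, σ' s) :
    ContinuousOn σ (Icc t₀ t₁) := by
  rcases lt_or_ge t₁ t₀ with h | h
  · simp [Icc_eq_empty_of_lt h]
  rw [← uIcc_of_le h] at hσ' hσ ⊢
  exact (continuousOn_const.add (intervalIntegral.continuousOn_primitive_interval hσ')).congr hσ

theorem le_one_of_mapsTo_Icc_of_ae_le {σ σ' : ℝ → ℝ} {t₀ a b : ℝ} (ha : 0 < a)
    (hσ : MapsTo σ (Icc t₀ (t₀ + a)) (Icc t₀ (t₀ + a)))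
    (hσ' : IntegrableOn σ' (Icc t₀ (t₀ + a)))
    (hσac : σ (t₀ + a) = σ t₀ + ∫ s in t₀..t₀ + a, σ' s)
    (hb : ∀ᵐ s, s ∈ Icc t₀ (t₀ + a) → b ≤ σ' s) : b ≤ 1 := by
  have hle : t₀ ≤ t₀ + a := by linarith
  have hstart := hσ (left_mem_Icc.2 hle)
  have hend := hσ (right_mem_Icc.2 hle)
  have hab : a * b ≤ a * 1 :=
    calc a * b = ∫ _ in t₀..t₀ + a, b := by simp
      _ ≤ ∫ s in t₀..t₀ + a, σ' s :=
        intervalIntegral.integral_mono_ae_restrict hle intervalIntegrable_const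
          ((intervalIntegrable_iff_integrableOn_Icc_of_le hle).2 hσ')
          ((ae_restrict_iff' measurableSet_Icc).2 hb)
      _ = σ (t₀ + a) - σ t₀ := by rw [hσac]; ring
      _ ≤ a * 1 := by linarith [hstart.1, hend.2]
  exact le_of_mul_le_mul_left hab ha

def continuousOnClosedBall {X E : Type*} [TopologicalSpace X] [SeminormedAddGroup E]
    (s : Set X) (R : ℝ) : Set (X → E) :=
  {ξ | ContinuousOn ξ s ∧ ∀ x ∈ s, ‖ξ x‖ ≤ R}

theorem eqOn_of_norm_sub_le_mul_iSup {X E : Type*} [NormedAddGroup E] {s : Set X} {c : ℝ}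
    {T : (X → E) → X → E} {ξ η : X → E}
    (hlip : ∀ x ∈ s, ‖T ξ x - T η x‖ ≤ c * ⨆ y : s, ‖ξ y - η y‖) (h : EqOn ξ η s) :
    EqOn (T ξ) (T η) s := fun x hx => by
  have : ⨆ y : s, ‖ξ y - η y‖ = 0 := by simp [h (Subtype.prop _)]
  simpa [this, sub_eq_zero] using hlip x hx

theorem ContinuousMap.continuousOn_extend_val {X E : Type*} [TopologicalSpace X]
    [TopologicalSpace E] [Zero E] {s : Set X} (f : C(s, E)) :
    ContinuousOn (Function.extend Subtype.val f 0) s := by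
  refine continuousOn_iff_continuous_domRestrict.2 ?_
  convert f.continuous using 1
  exact funext (Subtype.val_injective.extend_apply f 0)

theorem exists_eqOn_unique_of_contraction {X E : Type*} [TopologicalSpace X]
    [NormedAddCommGroup E] [CompleteSpace E] {s : Set X} (hs : IsCompact s) {R c : ℝ}
    (hR : 0 ≤ R) (hc : c < 1) {T : (X → E) → X → E}
    (hmaps : ∀ ξ ∈ continuousOnClosedBall s R, T ξ ∈ continuousOnClosedBall s R)
    (hlip : ∀ ξ ∈ continuousOnClosedBall s R, ∀ η ∈ continuousOnClosedBall s R,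
      ∀ x ∈ s, ‖T ξ x - T η x‖ ≤ c * ⨆ y : s, ‖ξ y - η y‖) :
    ∃ ξ ∈ continuousOnClosedBall s R, EqOn ξ (T ξ) s ∧
      ∀ η ∈ continuousOnClosedBall s R, EqOn η (T η) s → EqOn η ξ s := by
  have := isCompact_iff_compactSpace.mp hs
  let B := Metric.closedBall (0 : C(s, E)) R
  have : CompleteSpace B := Metric.isClosed_closedBall.completeSpace_coe
  have : Nonempty B := ⟨⟨0, Metric.mem_closedBall_self hR⟩⟩
  have mem_B {f : C(s, E)} : f ∈ B ↔ ∀ x, ‖f x‖ ≤ R := by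
    rw [mem_closedBall_zero_iff, ContinuousMap.norm_le _ hR]
  let extend (f : C(s, E)) : X → E := Function.extend Subtype.val f 0
  have extend_apply (f : C(s, E)) (x : s) : extend f x = f x :=
    Subtype.val_injective.extend_apply f 0 x
  have extend_mem (f : B) : extend f ∈ continuousOnClosedBall s R :=
    ⟨f.1.continuousOn_extend_val, fun x hx => extend_apply f ⟨x, hx⟩ ▸ mem_B.1 f.2 ⟨x, hx⟩⟩
  have iSup_extend (f g : C(s, E)) : ⨆ y : s, ‖extend f y - extend g y‖ = dist f g := by
    simp_rw [extend_apply, ← dist_eq_norm, ContinuousMap.dist_eq_iSup]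
  let restrict (ξ : X → E) (hξ : ξ ∈ continuousOnClosedBall s R) : B :=
    ⟨⟨s.domRestrict ξ, hξ.1.domRestrict⟩, mem_B.2 fun x => hξ.2 x x.2⟩
  let T' (f : B) : B := restrict (T (extend f)) (hmaps _ (extend_mem f))
  have hT' : ContractingWith c.toNNReal T' := by
    refine ⟨Real.toNNReal_lt_one.2 hc, LipschitzWith.of_dist_le_mul fun f g =>
      (ContinuousMap.dist_le (by positivity)).2 fun x => ?_⟩
    rw [dist_eq_norm]
    refine (hlip _ (extend_mem f) _ (extend_mem g) x x.2).trans ?_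
    rw [iSup_extend]
    exact mul_le_mul_of_nonneg_right c.le_coe_toNNReal dist_nonneg
  let f := hT'.fixedPoint T'
  have hf : T' f = f := hT'.fixedPoint_isFixedPt
  refine ⟨extend f, extend_mem f, fun x hx => ?_, fun η hη hηT x hx => ?_⟩
  · rw [extend_apply f ⟨x, hx⟩]
    conv_lhs => rw [← hf]
    rfl
  · have hfix : T' (restrict η hη) = restrict η hη := by
      refine Subtype.ext (ContinuousMap.ext fun y => ?_)
      have hlocal := eqOn_of_norm_sub_le_mul_iSup (hlip _ (extend_mem (restrict η hη)) _ hη)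
        fun z hz => extend_apply _ ⟨z, hz⟩
      exact (hlocal y.2).trans (hηT y.2).symm
    have hunique : restrict η hη = f := hT'.fixedPoint_unique hfix
    rw [extend_apply f ⟨x, hx⟩, ← hunique]
    rfl

theorem bddAbove_norm_image_of_norm_sub_le {X E F : Type*} [TopologicalSpace X]
    [SeminormedAddGroup E] [SeminormedAddGroup F] {s : Set X} {R lam : ℝ} (hR : 0 ≤ R)
    {g : (X → E) → F}
    (hg : ∀ μ₁ μ₂, μ₁ ∈ continuousOnClosedBall s R → μ₂ ∈ continuousOnClosedBall s R →
      ‖g μ₁ - g μ₂‖ ≤ lam * ⨆ x : s, ‖μ₁ x - μ₂ x‖) :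
    BddAbove ((fun μ => ‖g μ‖) '' continuousOnClosedBall s R) := by
  refine ⟨‖g 0‖ + |lam| * R, ?_⟩
  rintro _ ⟨μ, hμ, rfl⟩
  have h₀ : (0 : X → E) ∈ continuousOnClosedBall s R :=
    ⟨continuousOn_const, fun _ _ => by simpa using hR⟩
  have hsup : ⨆ x : s, ‖μ x - (0 : X → E) x‖ ≤ R :=
    Real.iSup_le (fun x => by simpa using hμ.2 x x.2) hR
  calc ‖g μ‖ ≤ ‖g 0‖ + ‖g μ - g 0‖ := norm_le_norm_add_norm_sub' _ _
    _ ≤ ‖g 0‖ + |lam| * R := by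
        gcongr
        refine (hg μ 0 hμ h₀).trans ((mul_le_mul_of_nonneg_right (le_abs_self lam) ?_).trans ?_)
        · exact Real.iSup_nonneg fun _ => norm_nonneg _
        · exact mul_le_mul_of_nonneg_left hsup (abs_nonneg lam)

theorem sub_mem_Icc_zero_of_mem_Icc {t₀ a t s : ℝ} (ht : t ≤ t₀ + a) (hs : s ∈ Icc t₀ t) :
    t - s ∈ Icc 0 a :=
  ⟨sub_nonneg.2 hs.2, by linarith [hs.1]⟩

section Volterra

variable {E F : Type*} [NormedAddCommGroup E] [NormedSpace ℝ E] [NormedAddCommGroup F]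
  [NormedSpace ℝ F] {K : ℝ → E →L[ℝ] F} {ψ : ℝ → E} {t₀ a t : ℝ}

theorem continuousOn_integral_clm_apply_sub (hK : ContinuousOn K (Icc 0 a))
    (hψ : ContinuousOn ψ (Icc t₀ (t₀ + a))) :
    ContinuousOn (fun t => ∫ s in t₀..t, K (t - s) (ψ s)) (Icc t₀ (t₀ + a)) := by
  rcases lt_or_ge a 0 with ha | ha
  · simp [Icc_eq_empty_of_lt (by linarith : t₀ + a < t₀)]
  have ht₀ : t₀ ≤ t₀ + a := by linarith
  -- Extending `K` and `ψ` continuously to `ℝ` makes the integrand jointly continuous.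
  let Kc := IccExtend ha (Icc (0 : ℝ) a |>.domRestrict K)
  let ψc := IccExtend ht₀ (Icc t₀ (t₀ + a) |>.domRestrict ψ)
  have hc : Continuous fun t => ∫ s in t₀..t, Kc (t - s) (ψc s) :=
    intervalIntegral.continuous_parametric_intervalIntegral_of_continuous
      ((hK.domRestrict.Icc_extend'.comp (continuous_fst.sub continuous_snd)).clm_apply
        (hψ.domRestrict.Icc_extend'.comp continuous_snd)) continuous_id
  refine hc.continuousOn.congr fun t ht => intervalIntegral.integral_congr fun s hs => ?_
  rw [uIcc_of_le ht.1] at hs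
  simp only [Kc, ψc, IccExtend_of_mem _ _ (sub_mem_Icc_zero_of_mem_Icc ht.2 hs),
    IccExtend_of_mem _ _ ⟨hs.1, hs.2.trans ht.2⟩, domRestrict_apply]

theorem intervalIntegrable_clm_apply_sub (hK : ContinuousOn K (Icc 0 a))
    (hψ : ContinuousOn ψ (Icc t₀ (t₀ + a))) (ht : t ∈ Icc t₀ (t₀ + a)) :
    IntervalIntegrable (fun s => K (t - s) (ψ s)) volume t₀ t := by
  refine ContinuousOn.intervalIntegrable ?_
  rw [uIcc_of_le ht.1]
  exact (hK.comp (continuousOn_const.sub continuousOn_id) fun s hs =>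
    sub_mem_Icc_zero_of_mem_Icc ht.2 hs).clm_apply (hψ.mono (Icc_subset_Icc_right ht.2))

theorem norm_integral_clm_apply_sub_le {C M : ℝ} (hK : ∀ u ∈ Icc 0 a, ‖K u‖ ≤ C)
    (hψ : ∀ s ∈ Icc t₀ (t₀ + a), ‖ψ s‖ ≤ M) (ht : t ∈ Icc t₀ (t₀ + a)) :
    ‖∫ s in t₀..t, K (t - s) (ψ s)‖ ≤ C * (a * M) := by
  have ha : 0 ≤ a := by linarith [ht.1.trans ht.2]
  have hC : 0 ≤ C := (norm_nonneg _).trans (hK 0 ⟨le_rfl, ha⟩)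
  have hM : 0 ≤ M := (norm_nonneg _).trans (hψ t₀ ⟨le_rfl, by linarith⟩)
  calc ‖∫ s in t₀..t, K (t - s) (ψ s)‖ ≤ C * M * |t - t₀| := by
        refine intervalIntegral.norm_integral_le_of_norm_le_const fun s hs => ?_
        rw [uIoc_of_le ht.1] at hs
        refine (K (t - s)).le_of_opNorm_le_of_le ?_ (hψ s ⟨hs.1.le, hs.2.trans ht.2⟩)
        exact hK _ (sub_mem_Icc_zero_of_mem_Icc ht.2 (Ioc_subset_Icc_self hs))
    _ ≤ C * (a * M) := by
        rw [abs_of_nonneg (sub_nonneg.2 ht.1)]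
        nlinarith [mul_nonneg hC hM, ht.2]

end Volterra

theorem ContinuousOn.comp_superposition {X Y E : Type*} [TopologicalSpace X]
    [TopologicalSpace Y] [TopologicalSpace E] {s : Set X} {φ : X → Y → E} {σ : X → X}
    {ξ : X → Y} (hφ : ContinuousOn (fun p : X × Y => φ p.1 p.2) (s ×ˢ univ))
    (hσ : ContinuousOn σ s) (hσs : MapsTo σ s s) (hξ : ContinuousOn ξ s) :
    ContinuousOn (fun r => φ r (ξ (σ r))) s :=
  hφ.comp (continuousOn_id.prodMk (hξ.comp hσ hσs)) fun _ hr => ⟨hr, mem_univ _⟩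

section MildSolution

variable {Λ : Type*} [NormedAddCommGroup Λ] [NormedSpace ℝ Λ] {t₀ a C : ℝ}
  {S K : ℝ → Λ →L[ℝ] Λ} {φ : ℝ → Λ → Λ} {σ : ℝ → ℝ} {g : (ℝ → Λ) → Λ} {ξ₀ : Λ}

noncomputable def mildSolutionMap (t₀ : ℝ) (S K : ℝ → Λ →L[ℝ] Λ) (φ : ℝ → Λ → Λ) (σ : ℝ → ℝ)
    (g : (ℝ → Λ) → Λ) (ξ₀ : Λ) (ξ : ℝ → Λ) (t : ℝ) : Λ :=
  S (t - t₀) ξ₀ - S (t - t₀) (g ξ) + ∫ s in t₀..t, K (t - s) (φ s (ξ (σ s)))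

theorem continuousOn_mildSolutionMap (hS : ContinuousOn S (Icc 0 a))
    (hK : ContinuousOn K (Icc 0 a))
    (hφ : ContinuousOn (fun p : ℝ × Λ => φ p.1 p.2) (Icc t₀ (t₀ + a) ×ˢ univ))
    (hσ : ContinuousOn σ (Icc t₀ (t₀ + a))) (hσI : MapsTo σ (Icc t₀ (t₀ + a)) (Icc t₀ (t₀ + a)))
    {ξ : ℝ → Λ} (hξ : ContinuousOn ξ (Icc t₀ (t₀ + a))) :
    ContinuousOn (mildSolutionMap t₀ S K φ σ g ξ₀ ξ) (Icc t₀ (t₀ + a)) := by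
  have hS' : ContinuousOn (fun t => S (t - t₀)) (Icc t₀ (t₀ + a)) :=
    hS.comp (continuousOn_id.sub continuousOn_const) fun t ht =>
      ⟨sub_nonneg.2 ht.1, by linarith [ht.2]⟩
  exact ((hS'.clm_apply continuousOn_const).sub (hS'.clm_apply continuousOn_const)).add
    (continuousOn_integral_clm_apply_sub hK (hφ.comp_superposition hσ hσI hξ))

theorem norm_mildSolutionMap_le {G M : ℝ} {ξ : ℝ → Λ} {t : ℝ}
    (hS : ∀ u ∈ Icc 0 a, ‖S u‖ ≤ C) (hK : ∀ u ∈ Icc 0 a, ‖K u‖ ≤ C) (hg : ‖g ξ‖ ≤ G)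
    (hφ : ∀ s ∈ Icc t₀ (t₀ + a), ‖φ s (ξ (σ s))‖ ≤ M) (ht : t ∈ Icc t₀ (t₀ + a)) :
    ‖mildSolutionMap t₀ S K φ σ g ξ₀ ξ t‖ ≤ C * (‖ξ₀‖ + G + a * M) := by
  have hSt := hS _ (sub_mem_Icc_zero_of_mem_Icc ht.2 (left_mem_Icc.2 ht.1))
  calc ‖mildSolutionMap t₀ S K φ σ g ξ₀ ξ t‖
      ≤ ‖S (t - t₀) ξ₀‖ + ‖S (t - t₀) (g ξ)‖ + ‖∫ s in t₀..t, K (t - s) (φ s (ξ (σ s)))‖ :=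
        norm_add_le_of_le (norm_sub_le _ _) le_rfl
    _ ≤ C * ‖ξ₀‖ + C * G + C * (a * M) := by
        gcongr
        · exact (S _).le_of_opNorm_le hSt _
        · exact (S _).le_of_opNorm_le_of_le hSt hg
        · exact norm_integral_clm_apply_sub_le hK hφ ht
    _ = C * (‖ξ₀‖ + G + a * M) := by ring

theorem norm_mildSolutionMap_sub_le {L D : ℝ} {ξ η : ℝ → Λ} {t : ℝ}
    (hK : ContinuousOn K (Icc 0 a))
    (hφξ : ContinuousOn (fun s => φ s (ξ (σ s))) (Icc t₀ (t₀ + a)))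
    (hφη : ContinuousOn (fun s => φ s (η (σ s))) (Icc t₀ (t₀ + a)))
    (hSC : ∀ u ∈ Icc 0 a, ‖S u‖ ≤ C) (hKC : ∀ u ∈ Icc 0 a, ‖K u‖ ≤ C) (hg : ‖g ξ - g η‖ ≤ L)
    (hφ : ∀ s ∈ Icc t₀ (t₀ + a), ‖φ s (ξ (σ s)) - φ s (η (σ s))‖ ≤ D)
    (ht : t ∈ Icc t₀ (t₀ + a)) :
    ‖mildSolutionMap t₀ S K φ σ g ξ₀ ξ t - mildSolutionMap t₀ S K φ σ g ξ₀ η t‖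
      ≤ C * (L + a * D) := by
  have hSt := hSC _ (sub_mem_Icc_zero_of_mem_Icc ht.2 (left_mem_Icc.2 ht.1))
  have hint : ∫ s in t₀..t, K (t - s) (φ s (ξ (σ s)) - φ s (η (σ s)))
      = (∫ s in t₀..t, K (t - s) (φ s (ξ (σ s)))) - ∫ s in t₀..t, K (t - s) (φ s (η (σ s))) := by
    simp_rw [map_sub]
    exact intervalIntegral.integral_sub (intervalIntegrable_clm_apply_sub hK hφξ ht)
      (intervalIntegrable_clm_apply_sub hK hφη ht)
  have hdiff : mildSolutionMap t₀ S K φ σ g ξ₀ ξ t - mildSolutionMap t₀ S K φ σ g ξ₀ η t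
      = S (t - t₀) (g η - g ξ) + ∫ s in t₀..t, K (t - s) (φ s (ξ (σ s)) - φ s (η (σ s))) := by
    rw [hint, map_sub, mildSolutionMap, mildSolutionMap]
    abel
  calc _ ≤ C * L + C * (a * D) := by
        rw [hdiff]
        refine norm_add_le_of_le ((S _).le_of_opNorm_le_of_le hSt ?_)
          (norm_integral_clm_apply_sub_le hKC hφ ht)
        rwa [norm_sub_rev]
    _ = C * (L + a * D) := by ring

theorem mildSolutionMap_mem_continuousOnClosedBall {δ R Z₂ Z₃ : ℝ}
    (hS : ContinuousOn S (Icc 0 a)) (hK : ContinuousOn K (Icc 0 a))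
    (hφ : ContinuousOn (fun p : ℝ × Λ => φ p.1 p.2) (Icc t₀ (t₀ + a) ×ˢ univ))
    (hσ : ContinuousOn σ (Icc t₀ (t₀ + a))) (hσI : MapsTo σ (Icc t₀ (t₀ + a)) (Icc t₀ (t₀ + a)))
    (hSC : ∀ u ∈ Icc 0 a, ‖S u‖ ≤ C) (hKC : ∀ u ∈ Icc 0 a, ‖K u‖ ≤ C) (hδ : 0 ≤ δ)
    (hφlip : ∀ s ∈ Icc t₀ (t₀ + a), ∀ x y : Λ, ‖x‖ ≤ R → ‖y‖ ≤ R →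
      ‖φ s x - φ s y‖ ≤ δ * ‖x - y‖)
    (hφ₀ : ∀ s ∈ Icc t₀ (t₀ + a), ‖φ s 0‖ ≤ Z₂)
    (hg : ∀ μ ∈ continuousOnClosedBall (Icc t₀ (t₀ + a)) R, ‖g μ‖ ≤ Z₃)
    (hR : C * (‖ξ₀‖ + Z₃ + a * (δ * R + Z₂)) ≤ R) {ξ : ℝ → Λ}
    (hξ : ξ ∈ continuousOnClosedBall (Icc t₀ (t₀ + a)) R) :
    mildSolutionMap t₀ S K φ σ g ξ₀ ξ ∈ continuousOnClosedBall (Icc t₀ (t₀ + a)) R := by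
  have hφξ : ∀ s ∈ Icc t₀ (t₀ + a), ‖φ s (ξ (σ s))‖ ≤ δ * R + Z₂ := fun s hs => by
    have hR₀ : 0 ≤ R := (norm_nonneg _).trans (hξ.2 s hs)
    have hξσ := hξ.2 _ (hσI hs)
    calc ‖φ s (ξ (σ s))‖ ≤ ‖φ s (ξ (σ s)) - φ s 0‖ + ‖φ s 0‖ := norm_le_norm_sub_add _ _
      _ ≤ δ * ‖ξ (σ s) - 0‖ + Z₂ := add_le_add (hφlip s hs _ _ hξσ (by simpa)) (hφ₀ s hs)
      _ ≤ δ * R + Z₂ := by rw [sub_zero]; gcongr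
  exact ⟨continuousOn_mildSolutionMap hS hK hφ hσ hσI hξ.1, fun t ht =>
    (norm_mildSolutionMap_le hSC hKC (hg ξ hξ) hφξ ht).trans hR⟩

theorem norm_mildSolutionMap_sub_le_iSup {δ R lam : ℝ} (hK : ContinuousOn K (Icc 0 a))
    (hφ : ContinuousOn (fun p : ℝ × Λ => φ p.1 p.2) (Icc t₀ (t₀ + a) ×ˢ univ))
    (hσ : ContinuousOn σ (Icc t₀ (t₀ + a))) (hσI : MapsTo σ (Icc t₀ (t₀ + a)) (Icc t₀ (t₀ + a)))
    (hSC : ∀ u ∈ Icc 0 a, ‖S u‖ ≤ C) (hKC : ∀ u ∈ Icc 0 a, ‖K u‖ ≤ C) (hδ : 0 ≤ δ)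
    (hφlip : ∀ s ∈ Icc t₀ (t₀ + a), ∀ x y : Λ, ‖x‖ ≤ R → ‖y‖ ≤ R →
      ‖φ s x - φ s y‖ ≤ δ * ‖x - y‖)
    (hg : ∀ μ₁ μ₂, μ₁ ∈ continuousOnClosedBall (Icc t₀ (t₀ + a)) R →
      μ₂ ∈ continuousOnClosedBall (Icc t₀ (t₀ + a)) R →
      ‖g μ₁ - g μ₂‖ ≤ lam * ⨆ t : Icc t₀ (t₀ + a), ‖μ₁ t - μ₂ t‖)
    {ξ η : ℝ → Λ} (hξ : ξ ∈ continuousOnClosedBall (Icc t₀ (t₀ + a)) R)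
    (hη : η ∈ continuousOnClosedBall (Icc t₀ (t₀ + a)) R) {t : ℝ}
    (ht : t ∈ Icc t₀ (t₀ + a)) :
    ‖mildSolutionMap t₀ S K φ σ g ξ₀ ξ t - mildSolutionMap t₀ S K φ σ g ξ₀ η t‖
      ≤ C * (lam + a * δ) * ⨆ t : Icc t₀ (t₀ + a), ‖ξ t - η t‖ := by
  have hφσ : ∀ s ∈ Icc t₀ (t₀ + a), ‖φ s (ξ (σ s)) - φ s (η (σ s))‖
      ≤ δ * ⨆ t : Icc t₀ (t₀ + a), ‖ξ t - η t‖ := fun s hs =>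
    (hφlip s hs _ _ (hξ.2 _ (hσI hs)) (hη.2 _ (hσI hs))).trans <| mul_le_mul_of_nonneg_left
      (isCompact_Icc.le_iSup_of_continuousOn (hξ.1.sub hη.1).norm (hσI hs)) hδ
  exact (norm_mildSolutionMap_sub_le hK (hφ.comp_superposition hσ hσI hξ.1)
    (hφ.comp_superposition hσ hσI hη.1) hSC hKC (hg ξ η hξ hη) hφσ ht).trans_eq (by ring)

end MildSolution

theorem existence_uniqueness_mild_solution_general
    {Λ : Type*} [NormedAddCommGroup Λ] [NormedSpace ℝ Λ] [CompleteSpace Λ]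
    (t₀ a : ℝ) (ha : 0 < a)
    (S K : ℝ → Λ →L[ℝ] Λ)
    (hS : ContinuousOn S (Set.Icc 0 a)) (hK : ContinuousOn K (Set.Icc 0 a))
    (ζ₁ : ℝ) (hζ₁ : ζ₁ = ⨆ t : Set.Icc (0 : ℝ) a, max ‖S t.1‖ ‖K t.1‖)
    (R : ℝ) (hR : 0 < R)
    (b : ℝ) (hb : 0 < b)
    (σ σ' : ℝ → ℝ)
    (hσmaps : ∀ t ∈ Set.Icc t₀ (t₀ + a), σ t ∈ Set.Icc t₀ (t₀ + a))
    (hσ'int : IntegrableOn σ' (Set.Icc t₀ (t₀ + a)))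
    (hσac : ∀ t ∈ Set.Icc t₀ (t₀ + a), σ t = σ t₀ + ∫ s in t₀..t, σ' s)
    (hσ'b : ∀ᵐ s, s ∈ Set.Icc t₀ (t₀ + a) → b ≤ σ' s)
    (δ : ℝ) (hδ : 0 < δ)
    (φ : ℝ → Λ → Λ)
    (hφcont : ContinuousOn (fun p : ℝ × Λ => φ p.1 p.2)
      (Set.Icc t₀ (t₀ + a) ×ˢ (Set.univ : Set Λ)))
    (hφlip : ∀ s ∈ Set.Icc t₀ (t₀ + a), ∀ x y : Λ, ‖x‖ ≤ R → ‖y‖ ≤ R →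
      ‖φ s x - φ s y‖ ≤ δ * ‖x - y‖)
    (ζ₂ : ℝ) (hζ₂ : ζ₂ = ⨆ s : Set.Icc t₀ (t₀ + a), ‖φ s.1 0‖)
    (g : (ℝ → Λ) → Λ) (lam : ℝ)
    (hg : ∀ μ₁ μ₂ : ℝ → Λ,
      (ContinuousOn μ₁ (Set.Icc t₀ (t₀ + a)) ∧ ∀ t ∈ Set.Icc t₀ (t₀ + a), ‖μ₁ t‖ ≤ R) →
      (ContinuousOn μ₂ (Set.Icc t₀ (t₀ + a)) ∧ ∀ t ∈ Set.Icc t₀ (t₀ + a), ‖μ₂ t‖ ≤ R) →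
      ‖g μ₁ - g μ₂‖ ≤ lam * ⨆ t : Set.Icc t₀ (t₀ + a), ‖μ₁ t.1 - μ₂ t.1‖)
    (ζ₃ : ℝ)
    (hζ₃ : ζ₃ = sSup ((fun μ : ℝ → Λ => ‖g μ‖) ''
      {μ : ℝ → Λ | ContinuousOn μ (Set.Icc t₀ (t₀ + a)) ∧
        ∀ t ∈ Set.Icc t₀ (t₀ + a), ‖μ t‖ ≤ R}))
    (ξ₀ : Λ)
    (hmain : ζ₁ * (‖ξ₀‖ + ζ₃ + a * δ * R / b + a * ζ₂) ≤ R)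
    (hcontr : ζ₁ * lam + ζ₁ * δ * a / b < 1) :
    ∃ ξ : ℝ → Λ,
      (ContinuousOn ξ (Set.Icc t₀ (t₀ + a)) ∧ ∀ t ∈ Set.Icc t₀ (t₀ + a), ‖ξ t‖ ≤ R) ∧
      (∀ t ∈ Set.Icc t₀ (t₀ + a), ξ t = S (t - t₀) ξ₀ - S (t - t₀) (g ξ)
        + ∫ s in t₀..t, K (t - s) (φ s (ξ (σ s)))) ∧
      (∀ ξ' : ℝ → Λ,
        (ContinuousOn ξ' (Set.Icc t₀ (t₀ + a)) ∧ ∀ t ∈ Set.Icc t₀ (t₀ + a), ‖ξ' t‖ ≤ R) →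
        (∀ t ∈ Set.Icc t₀ (t₀ + a), ξ' t = S (t - t₀) ξ₀ - S (t - t₀) (g ξ')
          + ∫ s in t₀..t, K (t - s) (φ s (ξ' (σ s)))) →
        ∀ t ∈ Set.Icc t₀ (t₀ + a), ξ' t = ξ t) := by
  have hb₁ : b ≤ 1 := le_one_of_mapsTo_Icc_of_ae_le ha hσmaps hσ'int
    (hσac _ (right_mem_Icc.2 (by linarith))) hσ'b
  have hσ : ContinuousOn σ (Icc t₀ (t₀ + a)) := continuousOn_Icc_of_eq_add_integral hσ'int hσac
  have hSK : ∀ u ∈ Icc 0 a, max ‖S u‖ ‖K u‖ ≤ ζ₁ := fun u hu =>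
    hζ₁ ▸ isCompact_Icc.le_iSup_of_continuousOn (hS.norm.sup hK.norm) hu
  have hζ₁₀ : 0 ≤ ζ₁ := (norm_nonneg _).trans ((le_max_left _ _).trans (hSK 0 ⟨le_rfl, ha.le⟩))
  have hφ₀ : ∀ s ∈ Icc t₀ (t₀ + a), ‖φ s 0‖ ≤ ζ₂ := fun s hs => hζ₂ ▸
    isCompact_Icc.le_iSup_of_continuousOn (f := fun s => ‖φ s 0‖)
      (hφcont.comp (continuousOn_id.prodMk continuousOn_const) fun _ hr => ⟨hr, mem_univ _⟩).norm hs
  have hg₃ : ∀ μ ∈ continuousOnClosedBall (Icc t₀ (t₀ + a)) R, ‖g μ‖ ≤ ζ₃ := fun μ hμ =>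
    hζ₃ ▸ le_csSup (bddAbove_norm_image_of_norm_sub_le hR.le hg) ⟨μ, hμ, rfl⟩
  have hSC : ∀ u ∈ Icc 0 a, ‖S u‖ ≤ ζ₁ := fun u hu => (le_max_left _ _).trans (hSK u hu)
  have hKC : ∀ u ∈ Icc 0 a, ‖K u‖ ≤ ζ₁ := fun u hu => (le_max_right _ _).trans (hSK u hu)
  -- `b ≤ 1`, so the terms `aδ / b` of the hypotheses dominate the terms `aδ` of the estimates.
  have hdiv : ∀ x, 0 ≤ x → x ≤ x / b := fun x hx => le_div_self hx hb hb₁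
  refine exists_eqOn_unique_of_contraction (T := mildSolutionMap t₀ S K φ σ g ξ₀)
    (c := ζ₁ * (lam + a * δ)) isCompact_Icc hR.le ?_
    (fun ξ hξ => mildSolutionMap_mem_continuousOnClosedBall hS hK hφcont hσ hσmaps hSC hKC
      hδ.le hφlip hφ₀ hg₃ ?_ hξ)
    (fun ξ hξ η hη t ht => norm_mildSolutionMap_sub_le_iSup hK hφcont hσ hσmaps hSC hKC
      hδ.le hφlip hg hξ hη ht)
  · have := mul_le_mul_of_nonneg_left (hdiv (a * δ) (by positivity)) hζ₁₀
    rw [show ζ₁ * (a * δ / b) = ζ₁ * δ * a / b by ring] at this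
    linarith
  · linarith [mul_le_mul_of_nonneg_left (hdiv (a * δ * R) (by positivity)) hζ₁₀]

/-- Theorem 1 of the paper: under the invariance condition
`ζ₁(‖ξ₀‖ + ζ₃ + aδR/b + aζ₂) ≤ R` and the contraction condition `ζ₁λ + ζ₁δa/b < 1`,
there exists a unique mild solution `ξ ∈ Ω = C(I, B_R)`, i.e. a unique `ξ` satisfying
`ξ(t) = S(t−t₀)ξ₀ − S(t−t₀)g(ξ) + ∫_{t₀}^{t} K(t−s) φ(s, ξ(σ(s))) ds` on `I`. -/
theorem existence_uniqueness_mild_solution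
    {Λ : Type*} [NormedAddCommGroup Λ] [NormedSpace ℝ Λ] [CompleteSpace Λ]
    (t₀ a : ℝ) (ht₀ : 0 ≤ t₀) (ha : 0 < a)
    (S K : ℝ → Λ →L[ℝ] Λ)
    (hS : ContinuousOn S (Set.Icc 0 a)) (hK : ContinuousOn K (Set.Icc 0 a))
    (ζ₁ : ℝ) (hζ₁ : ζ₁ = ⨆ t : Set.Icc (0 : ℝ) a, max ‖S t.1‖ ‖K t.1‖)
    (R : ℝ) (hR : 0 < R)
    (b : ℝ) (hb : 0 < b)
    (σ σ' : ℝ → ℝ)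
    (hσmaps : ∀ t ∈ Set.Icc t₀ (t₀ + a), σ t ∈ Set.Icc t₀ (t₀ + a))
    (hσ'int : IntegrableOn σ' (Set.Icc t₀ (t₀ + a)))
    (hσac : ∀ t ∈ Set.Icc t₀ (t₀ + a), σ t = σ t₀ + ∫ s in t₀..t, σ' s)
    (hσ'b : ∀ᵐ s, s ∈ Set.Icc t₀ (t₀ + a) → b ≤ σ' s)
    (δ : ℝ) (hδ : 0 < δ)
    (φ : ℝ → Λ → Λ)
    (hφcont : ContinuousOn (fun p : ℝ × Λ => φ p.1 p.2)
      (Set.Icc t₀ (t₀ + a) ×ˢ (Set.univ : Set Λ)))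
    (hφlip : ∀ s ∈ Set.Icc t₀ (t₀ + a), ∀ x y : Λ, ‖x‖ ≤ R → ‖y‖ ≤ R →
      ‖φ s x - φ s y‖ ≤ δ * ‖x - y‖)
    (ζ₂ : ℝ) (hζ₂ : ζ₂ = ⨆ s : Set.Icc t₀ (t₀ + a), ‖φ s.1 0‖)
    (g : (ℝ → Λ) → Λ) (lam : ℝ)
    (hg : ∀ μ₁ μ₂ : ℝ → Λ,
      (ContinuousOn μ₁ (Set.Icc t₀ (t₀ + a)) ∧ ∀ t ∈ Set.Icc t₀ (t₀ + a), ‖μ₁ t‖ ≤ R) →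
      (ContinuousOn μ₂ (Set.Icc t₀ (t₀ + a)) ∧ ∀ t ∈ Set.Icc t₀ (t₀ + a), ‖μ₂ t‖ ≤ R) →
      ‖g μ₁ - g μ₂‖ ≤ lam * ⨆ t : Set.Icc t₀ (t₀ + a), ‖μ₁ t.1 - μ₂ t.1‖)
    (ζ₃ : ℝ)
    (hζ₃ : ζ₃ = sSup ((fun μ : ℝ → Λ => ‖g μ‖) ''
      {μ : ℝ → Λ | ContinuousOn μ (Set.Icc t₀ (t₀ + a)) ∧
        ∀ t ∈ Set.Icc t₀ (t₀ + a), ‖μ t‖ ≤ R}))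
    (ξ₀ : Λ)
    (hmain : ζ₁ * (‖ξ₀‖ + ζ₃ + a * δ * R / b + a * ζ₂) ≤ R)
    (hcontr : ζ₁ * lam + ζ₁ * δ * a / b < 1) :
    ∃ ξ : ℝ → Λ,
      (ContinuousOn ξ (Set.Icc t₀ (t₀ + a)) ∧ ∀ t ∈ Set.Icc t₀ (t₀ + a), ‖ξ t‖ ≤ R) ∧
      (∀ t ∈ Set.Icc t₀ (t₀ + a), ξ t = S (t - t₀) ξ₀ - S (t - t₀) (g ξ)
        + ∫ s in t₀..t, K (t - s) (φ s (ξ (σ s)))) ∧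
      (∀ ξ' : ℝ → Λ,
        (ContinuousOn ξ' (Set.Icc t₀ (t₀ + a)) ∧ ∀ t ∈ Set.Icc t₀ (t₀ + a), ‖ξ' t‖ ≤ R) →
        (∀ t ∈ Set.Icc t₀ (t₀ + a), ξ' t = S (t - t₀) ξ₀ - S (t - t₀) (g ξ')
          + ∫ s in t₀..t, K (t - s) (φ s (ξ' (σ s)))) →
        ∀ t ∈ Set.Icc t₀ (t₀ + a), ξ' t = ξ t) :=
  existence_uniqueness_mild_solution_general t₀ a ha S K hS hK ζ₁ hζ₁ R hR b hb σ σ' hσmaps hσ'int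
    hσac hσ'b δ hδ φ hφcont hφlip ζ₂ hζ₂ g lam hg ζ₃ hζ₃ ξ₀ hmain hcontr
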